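/- arXiv:2209.14934 — 5 statements merged into one kernel-verified Lean document; each statement's English description precedes it below -/
import Mathlib

section
/- Let μ denote Lebesgue measure on ℝ^d, let c and Ω be measurable subsets of ℝ^d, let F be a finite index set, and for each f ∈ F let (P_f, N_f) be an oriented set whose parts P_f, N_f are measurable with finite Lebesgue measure. Assume: (no flux overlap) P_f ∩ P_{f'} = ∅ and N_f ∩ N_{f'} = ∅ whenever f ≠ f'; (orientation) (⋃_{f∈F} P_f) ∩ c = ∅; (no flux transit) (⋃_{f∈F} N_f) \ (⋃_{f∈F} P_f) ⊆ c. Let (b_i)_{i∈I} be a finite family of pairwise disjoint measurable subsets of ℝ^d such that each b_i satisfies b_i ⊆ c or b_i ∩ c = ∅. Then the total outgoing volume Σ_{i∈I} max(0, Σ_{f∈F} (μ(b_i ∩ Ω ∩ N_f) − μ(b_i ∩ Ω ∩ P_f))) is at most μ(c ∩ Ω). -/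
open MeasureTheory

/-- Bounded outflow theorem: given relatively oriented donating regions `(P f, N f)`
without flux overlap and transit errors, the total outgoing volume summed over the
pairwise disjoint neighbouring control volumes `b i` is bounded by the phase volume
`μ (c ∩ Ω)` contained in the control volume `c`. -/
theorem bounded_outflow {d : ℕ} (c Ω : Set (Fin d → ℝ))
    (hc : MeasurableSet c) (hΩ : MeasurableSet Ω)
    {F : Type*} [Fintype F] (P N : F → Set (Fin d → ℝ))
    (hPm : ∀ f, MeasurableSet (P f)) (hNm : ∀ f, MeasurableSet (N f))
    (hPfin : ∀ f, volume (P f) < ⊤) (hNfin : ∀ f, volume (N f) < ⊤)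
    -- no flux overlap errors
    (hPdisj : ∀ f f', f ≠ f' → P f ∩ P f' = ∅)
    (hNdisj : ∀ f f', f ≠ f' → N f ∩ N f' = ∅)
    -- orientation: the positively oriented parts lie outside of `c`
    (horient : (⋃ f, P f) ∩ c = ∅)
    -- no flux transit errors
    (htransit : (⋃ f, N f) \ (⋃ f, P f) ⊆ c)
    {I : Type*} [Fintype I] (b : I → Set (Fin d → ℝ))
    (hbm : ∀ i, MeasurableSet (b i))
    (hbdisj : ∀ i i', i ≠ i' → b i ∩ b i' = ∅)
    (hbc : ∀ i, b i ⊆ c ∨ b i ∩ c = ∅) :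
    ENNReal.ofReal (∑ i : I, max 0 (∑ f : F,
        ((volume (b i ∩ Ω ∩ N f)).toReal - (volume (b i ∩ Ω ∩ P f)).toReal)))
      ≤ volume (c ∩ Ω) := by
  classical
  set X : Set (Fin d → ℝ) := c ∩ Ω ∩ ⋃ f, N f with hX
  have hXm : MeasurableSet X := (hc.inter hΩ).inter (MeasurableSet.iUnion hNm)
  have hXfin : volume X < ⊤ := by
    calc volume X ≤ volume (⋃ f, N f) := measure_mono fun x hx => hx.2
    _ ≤ ∑ f, volume (N f) := measure_iUnion_fintype_le _ _
    _ < ⊤ := ENNReal.sum_lt_top.mpr fun f _ => hNfin f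
  -- per-neighbour key estimate
  have key : ∀ i, max 0 (∑ f : F,
      ((volume (b i ∩ Ω ∩ N f)).toReal - (volume (b i ∩ Ω ∩ P f)).toReal))
      ≤ (volume (b i ∩ X)).toReal := by
    intro i
    rcases hbc i with hsub | hdis
    · -- b i ⊆ c : influx is zero, outflux is measure of b i ∩ X
      have hP0 : ∀ f, volume (b i ∩ Ω ∩ P f) = 0 := by
        intro f
        have h0 : b i ∩ Ω ∩ P f = ∅ := by
          apply Set.eq_empty_of_subset_empty
          intro x hx
          have : x ∈ (⋃ f, P f) ∩ c :=
            ⟨Set.mem_iUnion.mpr ⟨f, hx.2⟩, hsub hx.1.1⟩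
          rw [horient] at this; exact this
        simp [h0]
      have hunion : (⋃ f, b i ∩ Ω ∩ N f) = b i ∩ X := by
        ext x
        simp only [Set.mem_iUnion, hX, Set.mem_inter_iff]
        constructor
        · rintro ⟨f, ⟨⟨hb, hΩx⟩, hN⟩⟩
          exact ⟨hb, ⟨hsub hb, hΩx⟩, f, hN⟩
        · rintro ⟨hb, ⟨hc', hΩx⟩, f, hf⟩
          exact ⟨f, ⟨hb, hΩx⟩, hf⟩
      have hmeas : volume (b i ∩ X) = ∑ f, volume (b i ∩ Ω ∩ N f) := by
        rw [← hunion, measure_iUnion ?_ (fun f => ((hbm i).inter hΩ).inter (hNm f)),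
          tsum_fintype]
        intro f f' hff'
        refine Set.disjoint_left.mpr fun x hx hx' => ?_
        have hm : x ∈ N f ∩ N f' := ⟨hx.2, hx'.2⟩
        rw [hNdisj f f' hff'] at hm
        exact hm
      have hNfin' : ∀ f ∈ Finset.univ, volume (b i ∩ Ω ∩ N f) ≠ ⊤ := fun f _ =>
        (lt_of_le_of_lt (measure_mono fun x hx => hx.2) (hNfin f)).ne
      have : ∑ f : F, ((volume (b i ∩ Ω ∩ N f)).toReal
          - (volume (b i ∩ Ω ∩ P f)).toReal)
          = (volume (b i ∩ X)).toReal := by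
        rw [hmeas, ENNReal.toReal_sum hNfin']
        apply Finset.sum_congr rfl
        intro f _
        rw [hP0 f]
        simp
      rw [this]
      exact max_le ENNReal.toReal_nonneg le_rfl
    · -- b i ∩ c = ∅ : outflux ≤ influx, so contribution is 0
      have hsub2 : b i ∩ Ω ∩ ⋃ f, N f ⊆ b i ∩ Ω ∩ ⋃ f, P f := by
        rintro x ⟨⟨hb, hΩx⟩, hN⟩
        refine ⟨⟨hb, hΩx⟩, ?_⟩
        by_contra hP
        have : x ∈ b i ∩ c := ⟨hb, htransit ⟨hN, hP⟩⟩
        rw [hdis] at this; exact this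
      have hNunion : volume (b i ∩ Ω ∩ ⋃ f, N f) = ∑ f, volume (b i ∩ Ω ∩ N f) := by
        rw [Set.inter_iUnion, measure_iUnion ?_
          (fun f => ((hbm i).inter hΩ).inter (hNm f)), tsum_fintype]
        intro f f' hff'
        refine Set.disjoint_left.mpr fun x hx hx' => ?_
        have hm : x ∈ N f ∩ N f' := ⟨hx.2, hx'.2⟩
        rw [hNdisj f f' hff'] at hm
        exact hm
      have hPunion : volume (b i ∩ Ω ∩ ⋃ f, P f) = ∑ f, volume (b i ∩ Ω ∩ P f) := by
        rw [Set.inter_iUnion, measure_iUnion ?_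
          (fun f => ((hbm i).inter hΩ).inter (hPm f)), tsum_fintype]
        intro f f' hff'
        refine Set.disjoint_left.mpr fun x hx hx' => ?_
        have hm : x ∈ P f ∩ P f' := ⟨hx.2, hx'.2⟩
        rw [hPdisj f f' hff'] at hm
        exact hm
      have hle : (∑ f, volume (b i ∩ Ω ∩ N f)) ≤ ∑ f, volume (b i ∩ Ω ∩ P f) := by
        rw [← hNunion, ← hPunion]; exact measure_mono hsub2
      have hNfin' : ∀ f ∈ Finset.univ, volume (b i ∩ Ω ∩ N f) ≠ ⊤ := fun f _ =>
        (lt_of_le_of_lt (measure_mono fun x hx => hx.2) (hNfin f)).ne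
      have hPfin' : ∀ f ∈ Finset.univ, volume (b i ∩ Ω ∩ P f) ≠ ⊤ := fun f _ =>
        (lt_of_le_of_lt (measure_mono fun x hx => hx.2) (hPfin f)).ne
      have hler : ∑ f : F, (volume (b i ∩ Ω ∩ N f)).toReal
          ≤ ∑ f : F, (volume (b i ∩ Ω ∩ P f)).toReal := by
        rw [← ENNReal.toReal_sum hNfin', ← ENNReal.toReal_sum hPfin']
        exact ENNReal.toReal_mono (ENNReal.sum_lt_top.mpr fun f _ =>
          lt_top_iff_ne_top.mpr (hPfin' f (Finset.mem_univ f))).ne hle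
      have hsum0 : ∑ f : F, ((volume (b i ∩ Ω ∩ N f)).toReal
          - (volume (b i ∩ Ω ∩ P f)).toReal) ≤ 0 := by
        rw [Finset.sum_sub_distrib]
        linarith
      calc max 0 (∑ f : F, ((volume (b i ∩ Ω ∩ N f)).toReal
            - (volume (b i ∩ Ω ∩ P f)).toReal)) = 0 := max_eq_left hsum0
      _ ≤ (volume (b i ∩ X)).toReal := ENNReal.toReal_nonneg
  -- assemble
  have hbXfin : ∀ i ∈ Finset.univ, volume (b i ∩ X) ≠ ⊤ := fun i _ =>
    (lt_of_le_of_lt (measure_mono fun x hx => hx.2) hXfin).ne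
  have hUmeas : volume (⋃ i, b i ∩ X) = ∑ i, volume (b i ∩ X) := by
    rw [measure_iUnion ?_ (fun i => (hbm i).inter hXm), tsum_fintype]
    intro i i' hii'
    refine Set.disjoint_left.mpr fun x hx hx' => ?_
    have hm : x ∈ b i ∩ b i' := ⟨hx.1, hx'.1⟩
    rw [hbdisj i i' hii'] at hm
    exact hm
  calc ENNReal.ofReal (∑ i : I, max 0 (∑ f : F,
        ((volume (b i ∩ Ω ∩ N f)).toReal - (volume (b i ∩ Ω ∩ P f)).toReal)))
      ≤ ENNReal.ofReal (∑ i : I, (volume (b i ∩ X)).toReal) :=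
        ENNReal.ofReal_le_ofReal (Finset.sum_le_sum fun i _ => key i)
    _ = ENNReal.ofReal ((∑ i, volume (b i ∩ X)).toReal) := by
        rw [ENNReal.toReal_sum hbXfin]
    _ = ∑ i, volume (b i ∩ X) := ENNReal.ofReal_toReal
        (ENNReal.sum_lt_top.mpr fun i _ =>
          lt_top_iff_ne_top.mpr (hbXfin i (Finset.mem_univ i))).ne
    _ = volume (⋃ i, b i ∩ X) := hUmeas.symm
    _ ≤ volume X := measure_mono (Set.iUnion_subset fun i x hx => hx.2)
    _ ≤ volume (c ∩ Ω) := measure_mono fun x hx => hx.1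
end

section
/- Let F be a finite index set (the faces of a control volume c), o : F → {−1, 1}, w : F → ℝ with w_f > 0, |c| > 0, δt > 0. Let u : F → ℝ satisfy Σ_{f∈F} o_f w_f u_f = 0, let θ : F → ℝ satisfy 0 ≤ θ_f ≤ 1 for all f, and set v_f := θ_f u_f. If α' = α − (δt/|c|) Σ_{f∈F} o_f w_f v_f, then |α' − α| ≤ C, where C := (δt/|c|) Σ_{f∈F} max(0, −o_f w_f u_f) is the local control-volume CFL number. -/
/-- CFL bound on the change of the volume fraction: if the face velocities are discretely
divergence free and the phase volume flux through each face is a fraction `θ_f ∈ [0,1]`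
of the total flux, then one time step changes the volume fraction by at most the local
control-volume CFL number `C = (δt/|c|) ∑_f [−o_f w_f u_f]⁺`. -/
theorem volume_fraction_change_le_cfl {F : Type*} [Fintype F]
    (o w u θ v : F → ℝ)
    (ho : ∀ f, o f = 1 ∨ o f = -1) (hw : ∀ f, 0 < w f)
    (cvol δt : ℝ) (hcvol : 0 < cvol) (hδt : 0 < δt)
    (hdiv : ∑ f, o f * w f * u f = 0)
    (hθ : ∀ f, 0 ≤ θ f ∧ θ f ≤ 1)
    (hv : ∀ f, v f = θ f * u f)
    (α α' : ℝ)
    (hupd : α' = α - (δt / cvol) * ∑ f, o f * w f * v f) :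
    |α' - α| ≤ (δt / cvol) * ∑ f, max 0 (-(o f * w f * u f)) := by
  set a : F → ℝ := fun f => o f * w f * u f with ha
  have hk : 0 ≤ δt / cvol := le_of_lt (div_pos hδt hcvol)
  have hsum : ∑ f, o f * w f * v f = ∑ f, θ f * a f := by
    refine Finset.sum_congr rfl fun f _ => ?_
    rw [hv f]; ring
  have hsymm : ∑ f, max 0 (a f) = ∑ f, max 0 (-(a f)) := by
    have : ∑ f, (max 0 (a f) - max 0 (-(a f))) = 0 := by
      have : ∀ f : F, max 0 (a f) - max 0 (-(a f)) = a f := fun f => by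
        rcases le_total 0 (a f) with h | h
        · rw [max_eq_right h, max_eq_left (by linarith)]; ring
        · rw [max_eq_left h, max_eq_right (by linarith)]; ring
      simpa [this] using hdiv
    have := Finset.sum_sub_distrib (s := Finset.univ)
      (f := fun f => max 0 (a f)) (g := fun f => max 0 (-(a f)))
    linarith [this ▸ ‹∑ f, (max 0 (a f) - max 0 (-(a f))) = 0›]
  have hub : ∑ f, θ f * a f ≤ ∑ f, max 0 (-(a f)) := by
    rw [← hsymm]
    refine Finset.sum_le_sum fun f _ => ?_
    obtain ⟨h0, h1⟩ := hθ f
    rcases le_total 0 (a f) with h | h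
    · calc θ f * a f ≤ 1 * a f := by nlinarith
        _ ≤ max 0 (a f) := by simpa using le_max_right 0 (a f)
    · have : θ f * a f ≤ 0 := mul_nonpos_of_nonneg_of_nonpos h0 h
      exact this.trans (le_max_left _ _)
  have hlb : -(∑ f, max 0 (-(a f))) ≤ ∑ f, θ f * a f := by
    rw [← Finset.sum_neg_distrib]
    refine Finset.sum_le_sum fun f _ => ?_
    obtain ⟨h0, h1⟩ := hθ f
    rcases le_total 0 (a f) with h | h
    · have h2 : max 0 (-(a f)) = 0 := max_eq_left (by linarith)
      rw [h2]; simpa using mul_nonneg h0 h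
    · have h2 : max 0 (-(a f)) = -(a f) := max_eq_right (by linarith)
      rw [h2]; nlinarith
  have habs : |∑ f, θ f * a f| ≤ ∑ f, max 0 (-(a f)) := abs_le.mpr ⟨by linarith, hub⟩
  rw [hupd]
  have : α - δt / cvol * ∑ f, o f * w f * v f - α = -(δt / cvol * ∑ f, θ f * a f) := by
    rw [hsum]; ring
  rw [this, abs_neg, abs_mul, abs_of_nonneg hk]
  exact mul_le_mul_of_nonneg_left habs hk
end

section
/- Let G be a finite index set (the faces of a staggered control volume ω_f), with orientations õ : G → {−1, 1}, face areas w : G → ℝ with w_g > 0, volume |ω| > 0, and time step δt > 0. Let ṽ : G → ℝ be volume fluxes, Φ : G → ℝ interpolated face values, and let real numbers ᾱ, ᾱ', φ, φ' satisfy the mass update ᾱ' = ᾱ − (δt/|ω|) Σ_{g∈G} õ_g w_g ṽ_g and the momentum update ᾱ' φ' = ᾱ φ − (δt/|ω|) Σ_{g∈G} õ_g w_g ṽ_g Φ_g. Define W⁺ := (δt/|ω|) Σ_{g∈G} max(0, −õ_g w_g ṽ_g) and W⁻ := (δt/|ω|) Σ_{g∈G} max(0, õ_g w_g ṽ_g).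 If ᾱ' ≥ m₀ for some m₀ > 0, then |φ' − φ| ≤ ((W⁺ + W⁻)/m₀) · max_{g∈G} |Φ_g − φ|. -/
/-- Boundedness of the modified flux interpolant: if the staggered mass and momentum are
updated by the conservative advection scheme and the new staggered volume fraction is
bounded from below by `m₀ > 0`, then the change in the advected scalar is bounded by
`((W⁺ + W⁻)/m₀) ⬝ max_g |Φ_g − φ|`. -/
theorem modified_flux_interpolant_bounded {G : Type*} [Fintype G] [Nonempty G]
    (o w v Φ : G → ℝ)
    (ho : ∀ g, o g = 1 ∨ o g = -1) (hw : ∀ g, 0 < w g)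
    (vol δt : ℝ) (hvol : 0 < vol) (hδt : 0 < δt)
    (α α' φ φ' m₀ : ℝ) (hm₀ : 0 < m₀)
    (hmass : α' = α - (δt / vol) * ∑ g, o g * w g * v g)
    (hmom : α' * φ' = α * φ - (δt / vol) * ∑ g, o g * w g * v g * Φ g)
    (hα' : m₀ ≤ α') :
    |φ' - φ| ≤
      (((δt / vol) * ∑ g, max 0 (-(o g * w g * v g)))
        + ((δt / vol) * ∑ g, max 0 (o g * w g * v g))) / m₀
      * Finset.univ.sup' Finset.univ_nonempty (fun g => |Φ g - φ|) := by
  set c := δt / vol with hc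
  have hcpos : 0 < c := div_pos hδt hvol
  set M := Finset.univ.sup' Finset.univ_nonempty (fun g => |Φ g - φ|) with hM
  have hMnn : 0 ≤ M := by
    obtain ⟨g⟩ := (inferInstance : Nonempty G)
    exact le_trans (abs_nonneg (Φ g - φ))
      (Finset.le_sup' (fun g => |Φ g - φ|) (Finset.mem_univ g))
  have hα'pos : 0 < α' := lt_of_lt_of_le hm₀ hα'
  -- key identity
  have hs : ∑ g, (o g * w g * v g) * (Φ g - φ)
      = (∑ g, o g * w g * v g * Φ g) - (∑ g, o g * w g * v g) * φ := by
    rw [Finset.sum_mul, ← Finset.sum_sub_distrib]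
    exact Finset.sum_congr rfl fun g _ => by ring
  have key : α' * (φ' - φ) = -(c * ∑ g, (o g * w g * v g) * (Φ g - φ)) := by
    rw [hs]
    linear_combination hmom - φ * hmass
  -- sum of maxes equals sum of abs
  have habs : (∑ g, max 0 (-(o g * w g * v g))) + (∑ g, max 0 (o g * w g * v g))
      = ∑ g, |o g * w g * v g| := by
    rw [← Finset.sum_add_distrib]
    refine Finset.sum_congr rfl fun g _ => ?_
    rcases le_total 0 (o g * w g * v g) with h | h
    · rw [max_eq_left (neg_nonpos.mpr h), max_eq_right h, abs_of_nonneg h, zero_add]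
    · rw [max_eq_right (neg_nonneg.mpr h), max_eq_left h, abs_of_nonpos h, add_zero]
  have hbound : |φ' - φ| ≤ c * (∑ g, |o g * w g * v g|) * M / m₀ := by
    have h1 : α' * |φ' - φ| = |α' * (φ' - φ)| := by
      rw [abs_mul, abs_of_pos hα'pos]
    have h2 : |α' * (φ' - φ)| ≤ c * (∑ g, |o g * w g * v g|) * M := by
      rw [key, abs_neg, abs_mul, abs_of_pos hcpos, mul_assoc]
      apply mul_le_mul_of_nonneg_left _ hcpos.le
      calc |∑ g, (o g * w g * v g) * (Φ g - φ)|
          ≤ ∑ g, |(o g * w g * v g) * (Φ g - φ)| := Finset.abs_sum_le_sum_abs _ _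
        _ ≤ ∑ g, |o g * w g * v g| * M := by
            refine Finset.sum_le_sum fun g _ => ?_
            rw [abs_mul]
            exact mul_le_mul_of_nonneg_left
              (Finset.le_sup' (fun g => |Φ g - φ|) (Finset.mem_univ g)) (abs_nonneg _)
        _ = (∑ g, |o g * w g * v g|) * M := by rw [← Finset.sum_mul]
    have h3 : m₀ * |φ' - φ| ≤ α' * |φ' - φ| :=
      mul_le_mul_of_nonneg_right hα' (abs_nonneg _)
    have h4 := h3.trans (h1.le.trans h2)
    rw [div_eq_mul_inv]
    calc |φ' - φ| = m₀ * |φ' - φ| * m₀⁻¹ := by field_simp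
      _ ≤ c * (∑ g, |o g * w g * v g|) * M * m₀⁻¹ :=
        mul_le_mul_of_nonneg_right h4 (inv_nonneg.mpr hm₀.le)
  calc |φ' - φ| ≤ c * (∑ g, |o g * w g * v g|) * M / m₀ := hbound
    _ = ((c * ∑ g, max 0 (-(o g * w g * v g))) + (c * ∑ g, max 0 (o g * w g * v g))) / m₀ * M := by
        rw [← mul_add, habs]; ring
end

section
/- Let F and G be finite sets, s, t : G → F, and w : G → ℝ. For φ : F → ℝ define the central interpolant Φ̄_g := ½(φ(s g) + φ(t g)) and, for any edge field T : G → ℝ, the discrete divergence Div(T)_f := Σ_{g : s g = f} w_g T_g − Σ_{g : t g = f} w_g T_g. Then for every m : G → ℝ and φ : F → ℝ, Σ_{f∈F} φ_f · Div(m · Φ̄)_f = ½ Σ_{f∈F} φ_f² · Div(m)_f, where (m · Φ̄)_g := m_g Φ̄_g. -/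
open Finset

lemma sum_fiber_mul {F G : Type*} [Fintype F] [Fintype G] [DecidableEq F]
    (u : G → F) (c : F → ℝ) (h : G → ℝ) :
    ∑ f, c f * ∑ g ∈ univ.filter (fun g => u g = f), h g
      = ∑ g, c (u g) * h g := by
  have : ∀ f, c f * ∑ g ∈ univ.filter (fun g => u g = f), h g
      = ∑ g ∈ univ.filter (fun g => u g = f), c (u g) * h g := by
    intro f
    rw [mul_sum]
    exact sum_congr rfl (fun g hg => by
      rw [(mem_filter.mp hg).2])
  rw [sum_congr rfl (fun f _ => this f)]
  exact Finset.sum_fiberwise _ _ _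

/-- Discrete summation-by-parts identity underlying semi-discrete conservation of quadratic
invariants: with the central (Lax–Wendroff) flux interpolant
`Φ̄_g = ½(φ(s g) + φ(t g))` and weighted staggered divergence
`Div(T)_f = ∑_{g : s g = f} w_g T_g − ∑_{g : t g = f} w_g T_g`, one has
`∑_f φ_f ⬝ Div(m ⬝ Φ̄)_f = ½ ∑_f φ_f² ⬝ Div(m)_f`. -/
theorem discrete_product_rule {F G : Type*} [Fintype F] [Fintype G] [DecidableEq F]
    (s t : G → F) (w : G → ℝ) (m : G → ℝ) (φ : F → ℝ) :
    ∑ f, φ f *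
      ((∑ g ∈ univ.filter (fun g => s g = f), w g * (m g * ((φ (s g) + φ (t g)) / 2)))
        - (∑ g ∈ univ.filter (fun g => t g = f), w g * (m g * ((φ (s g) + φ (t g)) / 2))))
    = (1/2 : ℝ) * ∑ f, (φ f)^2 *
      ((∑ g ∈ univ.filter (fun g => s g = f), w g * m g)
        - (∑ g ∈ univ.filter (fun g => t g = f), w g * m g)) := by
  simp only [mul_sub, sum_sub_distrib,
    sum_fiber_mul s φ (fun g => w g * (m g * ((φ (s g) + φ (t g)) / 2))),
    sum_fiber_mul t φ (fun g => w g * (m g * ((φ (s g) + φ (t g)) / 2))),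
    sum_fiber_mul s (fun f => (φ f)^2) (fun g => w g * m g),
    sum_fiber_mul t (fun f => (φ f)^2) (fun g => w g * m g)]
  simp only [Finset.mul_sum, ← sum_sub_distrib]
  exact sum_congr rfl fun g _ => by ring
end

section
/- Let F and G be finite sets, s, t : G → F, w : G → ℝ, and ν : F → ℝ with ν_f > 0 for all f. Let m : ℝ → G → ℝ, and let a, φ : ℝ → F → ℝ be such that for each f, t ↦ a(t)_f and t ↦ φ(t)_f are differentiable. Suppose that for every t ∈ ℝ and every f ∈ F the semi-discrete advection equations hold: ν_f · d/dt(a(t)_f φ(t)_f) + Div(m(t) · Φ̄(t))_f = 0 and ν_f · d/dt(a(t)_f) + Div(m(t))_f = 0, where Φ̄(t)_g := ½(φ(t)_{s g} + φ(t)_{t g}) and Div(T)_f := Σ_{g : s g = f} w_g T_g − Σ_{g : t g = f} w_g T_g for T : G → ℝ. Then the kinetic energy E(t) := ½ Σ_{f∈F} ν_f a(t)_f φ(t)_f² has derivative zero at every t ∈ ℝ; in particular E is constant. -/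
open Finset

lemma fiber_sum' {F G : Type*} [Fintype F] [Fintype G] [DecidableEq F] (k : G → F)
    (h : F → G → ℝ) :
    ∑ f, ∑ g ∈ univ.filter (fun g => k g = f), h f g = ∑ g, h (k g) g := by
  simp only [Finset.sum_filter]
  rw [Finset.sum_comm]
  simp

/-- Semi-discrete conservation of kinetic energy for the staggered advection scheme with
the central (Lax–Wendroff) flux interpolant: if the semi-discrete momentum and mass
transport equations hold, then the kinetic energy `E(t) = ½ ∑_f ν_f a(t)_f φ(t)_f²`
has derivative zero at every time; in particular it is constant. -/
theorem semidiscrete_energy_conservation {F G : Type*} [Fintype F] [Fintype G] [DecidableEq F]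
    (s t : G → F) (w : G → ℝ) (ν : F → ℝ) (hν : ∀ f, 0 < ν f)
    (m : ℝ → G → ℝ) (a φ : ℝ → F → ℝ)
    (ha : ∀ f, Differentiable ℝ (fun τ => a τ f))
    (hφ : ∀ f, Differentiable ℝ (fun τ => φ τ f))
    (hmom : ∀ τ f, ν f * deriv (fun τ => a τ f * φ τ f) τ
      + ((∑ g ∈ univ.filter (fun g => s g = f), w g * (m τ g * ((φ τ (s g) + φ τ (t g)) / 2)))
        - (∑ g ∈ univ.filter (fun g => t g = f),
            w g * (m τ g * ((φ τ (s g) + φ τ (t g)) / 2)))) = 0)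
    (hmass : ∀ τ f, ν f * deriv (fun τ => a τ f) τ
      + ((∑ g ∈ univ.filter (fun g => s g = f), w g * m τ g)
        - (∑ g ∈ univ.filter (fun g => t g = f), w g * m τ g)) = 0) :
    (∀ τ : ℝ, deriv (fun τ => (1/2 : ℝ) * ∑ f, ν f * a τ f * (φ τ f)^2) τ = 0)
    ∧ (∀ τ₁ τ₂ : ℝ, (1/2 : ℝ) * ∑ f, ν f * a τ₁ f * (φ τ₁ f)^2
        = (1/2 : ℝ) * ∑ f, ν f * a τ₂ f * (φ τ₂ f)^2) := by
  have key : ∀ τ : ℝ, HasDerivAt (fun τ => (1/2 : ℝ) * ∑ f, ν f * a τ f * (φ τ f)^2) 0 τ := by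
    intro τ
    have hA : ∀ f, HasDerivAt (fun τ => a τ f) (deriv (fun τ => a τ f) τ) τ :=
      fun f => ((ha f).differentiableAt).hasDerivAt
    have hP : ∀ f, HasDerivAt (fun τ => φ τ f) (deriv (fun τ => φ τ f) τ) τ :=
      fun f => ((hφ f).differentiableAt).hasDerivAt
    set a' : F → ℝ := fun f => deriv (fun τ => a τ f) τ with ha'
    set φ' : F → ℝ := fun f => deriv (fun τ => φ τ f) τ with hφ'
    have hterm : ∀ f, HasDerivAt (fun τ => ν f * a τ f * (φ τ f)^2)
        (ν f * (a' f * (φ τ f)^2 + a τ f * (2 * φ τ f * φ' f))) τ := by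
      intro f
      have h1 : HasDerivAt (fun τ => (φ τ f)^2) (2 * φ τ f * φ' f) τ := by
        have := (hP f).pow 2
        simpa [Pi.pow_def, mul_comm, mul_assoc, mul_left_comm] using this
      have h2 : HasDerivAt (fun τ => a τ f * (φ τ f)^2)
          (a' f * (φ τ f)^2 + a τ f * (2 * φ τ f * φ' f)) τ := (hA f).mul h1
      have := h2.const_mul (ν f)
      simpa [mul_assoc] using this
    have hsum : HasDerivAt (fun τ => ∑ f, ν f * a τ f * (φ τ f)^2)
        (∑ f, ν f * (a' f * (φ τ f)^2 + a τ f * (2 * φ τ f * φ' f))) τ := by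
      exact HasDerivAt.fun_sum (fun f _ => hterm f)
    have hDzero : (∑ f, ν f * (a' f * (φ τ f)^2 + a τ f * (2 * φ τ f * φ' f))) = 0 := by
      -- rewrite each term using the momentum and mass equations
      have hmom' : ∀ f, ν f * (a' f * φ τ f + a τ f * φ' f)
          + ((∑ g ∈ univ.filter (fun g => s g = f), w g * (m τ g * ((φ τ (s g) + φ τ (t g)) / 2)))
            - (∑ g ∈ univ.filter (fun g => t g = f),
                w g * (m τ g * ((φ τ (s g) + φ τ (t g)) / 2)))) = 0 := by
        intro f
        have hd : deriv (fun τ => a τ f * φ τ f) τ = a' f * φ τ f + a τ f * φ' f :=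
          ((hA f).mul (hP f)).deriv
        have := hmom τ f
        rwa [hd] at this
      have hstep : ∀ f, ν f * (a' f * (φ τ f)^2 + a τ f * (2 * φ τ f * φ' f))
          = (∑ g ∈ univ.filter (fun g => s g = f),
                (-2 * φ τ f * (w g * (m τ g * ((φ τ (s g) + φ τ (t g)) / 2)))
                  + (φ τ f)^2 * (w g * m τ g)))
            - (∑ g ∈ univ.filter (fun g => t g = f),
                (-2 * φ τ f * (w g * (m τ g * ((φ τ (s g) + φ τ (t g)) / 2)))
                  + (φ τ f)^2 * (w g * m τ g))) := by
        intro f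
        have h1 := hmom' f
        have h2 := hmass τ f
        rw [Finset.sum_add_distrib, Finset.sum_add_distrib, ← Finset.mul_sum, ← Finset.mul_sum,
          ← Finset.mul_sum, ← Finset.mul_sum]
        linear_combination 2 * φ τ f * h1 - (φ τ f)^2 * h2
      calc (∑ f, ν f * (a' f * (φ τ f)^2 + a τ f * (2 * φ τ f * φ' f)))
          = (∑ f, ∑ g ∈ univ.filter (fun g => s g = f),
                (-2 * φ τ f * (w g * (m τ g * ((φ τ (s g) + φ τ (t g)) / 2)))
                  + (φ τ f)^2 * (w g * m τ g)))
            - (∑ f, ∑ g ∈ univ.filter (fun g => t g = f),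
                (-2 * φ τ f * (w g * (m τ g * ((φ τ (s g) + φ τ (t g)) / 2)))
                  + (φ τ f)^2 * (w g * m τ g))) := by
            rw [← Finset.sum_sub_distrib]
            exact Finset.sum_congr rfl (fun f _ => hstep f)
        _ = (∑ g, (-2 * φ τ (s g) * (w g * (m τ g * ((φ τ (s g) + φ τ (t g)) / 2)))
                  + (φ τ (s g))^2 * (w g * m τ g)))
            - (∑ g, (-2 * φ τ (t g) * (w g * (m τ g * ((φ τ (s g) + φ τ (t g)) / 2)))
                  + (φ τ (t g))^2 * (w g * m τ g))) := by
            rw [fiber_sum' s, fiber_sum' t]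
        _ = ∑ g, ((-2 * φ τ (s g) * (w g * (m τ g * ((φ τ (s g) + φ τ (t g)) / 2)))
                  + (φ τ (s g))^2 * (w g * m τ g))
                - (-2 * φ τ (t g) * (w g * (m τ g * ((φ τ (s g) + φ τ (t g)) / 2)))
                  + (φ τ (t g))^2 * (w g * m τ g))) := by
            rw [Finset.sum_sub_distrib]
        _ = 0 := by
            rw [Finset.sum_eq_zero]
            intro g _
            ring
    have := hsum.const_mul (1/2 : ℝ)
    rw [hDzero] at this
    simpa using this
  have h1 : ∀ τ : ℝ, deriv (fun τ => (1/2 : ℝ) * ∑ f, ν f * a τ f * (φ τ f)^2) τ = 0 :=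
    fun τ => (key τ).deriv
  refine ⟨h1, fun τ₁ τ₂ => ?_⟩
  exact is_const_of_deriv_eq_zero (fun τ => (key τ).differentiableAt) h1 τ₁ τ₂
end
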